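/- arXiv:2111.09812 — 7 statements merged into one kernel-verified Lean document; each statement's English description precedes it below -/
import Mathlib

section
/- Let θ₀, θ∞, η₀, η∞ be complex constants and let U ⊆ ℂ be an open set not containing 0. Suppose f, g : ℂ → ℂ are differentiable on U and satisfy the Okamoto Hamiltonian system f'(t) = (4 f(t)² g(t) − 2 η∞ t f(t)² − (1 + 2θ₀) f(t) + 2 η₀ t)/t and g'(t) = −(4 f(t) g(t)² − (1 + 2θ₀ + 4 η∞ t f(t)) g(t) + η∞ (θ₀ + θ∞) t)/t for all t ∈ U, and that f(t) ≠ 0 on U. Then f satisfies the third Painlevé equation f''(t) = f'(t)²/f(t) − f'(t)/t + (α f(t)² + β)/t + γ f(t)³ + δ/f(t) on U, with parameters α = −4 η∞ θ∞, β = 4 η₀(1 + θ₀), γ = 4 η∞², δ = −4 η₀². -/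
/-!
Differentiating `f' = N(t, f, g) / t` along the flow and substituting `g'` from the second
equation expresses `f''` through `t`, `f`, `g` and `f'`; eliminating `g` with the first equation,
`4 f² g = t f' + 2 η∞ t f² + (1 + 2θ₀) f − 2 η₀ t`, leaves exactly the right-hand side of PIII.
-/

section OkamotoSystem

variable {K : Type*} [Field K]

/-- The Okamoto vector field: `okamotoF = ∂H^Ok/∂g` and `okamotoG = -∂H^Ok/∂f`. -/
def okamotoF (θ₀ η₀ ηinf t F G : K) : K :=
  (4 * F ^ 2 * G - 2 * ηinf * t * F ^ 2 - (1 + 2 * θ₀) * F + 2 * η₀ * t) / t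

def okamotoG (θ₀ θinf ηinf t F G : K) : K :=
  -((4 * F * G ^ 2 - (1 + 2 * θ₀ + 4 * ηinf * t * F) * G + ηinf * (θ₀ + θinf) * t) / t)

def painleveIII (α β γ δ t x dx : K) : K :=
  dx ^ 2 / x - dx / t + (α * x ^ 2 + β) / t + γ * x ^ 3 + δ / x

theorem okamoto_second_derivative_eq_painleveIII (θ₀ θinf η₀ ηinf t F G : K)
    (ht : t ≠ 0) (hF : F ≠ 0) :
    let a := okamotoF θ₀ η₀ ηinf t F G
    let b := okamotoG θ₀ θinf ηinf t F G
    (8 * F * G * a + 4 * F ^ 2 * b - 2 * ηinf * F ^ 2 - 4 * ηinf * t * F * a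
        - (1 + 2 * θ₀) * a + 2 * η₀ - a) / t =
      painleveIII (-4 * ηinf * θinf) (4 * η₀ * (1 + θ₀)) (4 * ηinf ^ 2) (-4 * η₀ ^ 2) t F a := by
  simp only [okamotoF, okamotoG, painleveIII]
  field_simp
  ring

end OkamotoSystem

section Derivatives

variable {𝕜 : Type*} [NontriviallyNormedField 𝕜]

theorem hasDerivAt_deriv_of_isOpen {E : Type*} [NormedAddCommGroup E] [NormedSpace 𝕜 E]
    {f φ : 𝕜 → E} {U : Set 𝕜} {t : 𝕜} {φ' : E} (hU : IsOpen U)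
    (hf : ∀ s ∈ U, HasDerivAt f (φ s) s) (ht : t ∈ U) (hφ : HasDerivAt φ φ' t) :
    HasDerivAt (deriv f) φ' t :=
  hφ.congr_of_eventuallyEq <| Filter.eventually_of_mem (hU.mem_nhds ht) fun s hs => (hf s hs).deriv

theorem hasDerivAt_okamotoF_comp (θ₀ η₀ ηinf : 𝕜) {f g : 𝕜 → 𝕜} {t a b : 𝕜}
    (hf : HasDerivAt f a t) (hg : HasDerivAt g b t) (ht : t ≠ 0) :
    HasDerivAt (fun s => okamotoF θ₀ η₀ ηinf s (f s) (g s))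
      ((8 * f t * g t * a + 4 * f t ^ 2 * b - 2 * ηinf * f t ^ 2 - 4 * ηinf * t * f t * a
        - (1 + 2 * θ₀) * a + 2 * η₀ - okamotoF θ₀ η₀ ηinf t (f t) (g t)) / t) t := by
  have hid : HasDerivAt (fun s : 𝕜 => s) 1 t := hasDerivAt_id' t
  have hN := (((((hf.fun_pow 2).const_mul 4).fun_mul hg).fun_sub
    ((hid.const_mul (2 * ηinf)).fun_mul (hf.fun_pow 2))).fun_sub
    (hf.const_mul (1 + 2 * θ₀))).fun_add (hid.const_mul (2 * η₀))
  refine (hN.fun_div hid ht).congr_deriv ?_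
  simp only [okamotoF]
  field_simp
  ring

end Derivatives

/-- Solutions of the Okamoto Hamiltonian system for PIII give
solutions of the third Painlevé equation with parameters
`α = −4η∞θ∞`, `β = 4η₀(1+θ₀)`, `γ = 4η∞²`, `δ = −4η₀²`. -/
theorem okamoto_system_gives_PIII (θ₀ θinf η₀ ηinf : ℂ) (U : Set ℂ)
    (hU : IsOpen U) (hU0 : (0 : ℂ) ∉ U) (f g : ℂ → ℂ)
    (hf : ∀ t ∈ U, HasDerivAt f
      ((4 * (f t) ^ 2 * g t - 2 * ηinf * t * (f t) ^ 2 - (1 + 2 * θ₀) * f t + 2 * η₀ * t) / t) t)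
    (hg : ∀ t ∈ U, HasDerivAt g
      (-((4 * f t * (g t) ^ 2 - (1 + 2 * θ₀ + 4 * ηinf * t * f t) * g t
        + ηinf * (θ₀ + θinf) * t) / t)) t)
    (hfne : ∀ t ∈ U, f t ≠ 0) :
    ∀ t ∈ U, deriv (deriv f) t =
      (deriv f t) ^ 2 / f t - deriv f t / t
        + ((-4 * ηinf * θinf) * (f t) ^ 2 + 4 * η₀ * (1 + θ₀)) / t
        + (4 * ηinf ^ 2) * (f t) ^ 3 + (-4 * η₀ ^ 2) / f t := by
  intro t ht
  have ht0 : t ≠ 0 := fun h => hU0 (h ▸ ht)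
  have hft : HasDerivAt f (okamotoF θ₀ η₀ ηinf t (f t) (g t)) t := hf t ht
  have hgt : HasDerivAt g (okamotoG θ₀ θinf ηinf t (f t) (g t)) t := hg t ht
  have hf'' := hasDerivAt_deriv_of_isOpen hU hf ht (hasDerivAt_okamotoF_comp θ₀ η₀ ηinf hft hgt ht0)
  rw [hf''.deriv, hft.deriv]
  exact okamoto_second_derivative_eq_painleveIII θ₀ θinf η₀ ηinf t (f t) (g t) ht0 (hfne t ht)
end

section
/- Let α, β, γ, δ be complex constants and let U ⊆ ℂ be an open set not containing 0. Suppose x, y : ℂ → ℂ are differentiable on U and satisfy the Filipuk–Żołądek system x'(t) = x(t)² y(t)/t and y'(t) = α − x(t) y(t)²/t + β/x(t)² + γ t x(t) + δ t/x(t)³ for all t ∈ U, and that x(t) ≠ 0 on U. Then x satisfies the third Painlevé equation x''(t) = x'(t)²/x(t) − x'(t)/t + (α x(t)² + β)/t + γ x(t)³ + δ/x(t) on U, with the same parameters α, β, γ, δ. -/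
open Filter Topology

/-- The second component `y' = -∂H/∂x` of the Filipuk–Żołądek Hamiltonian vector field. -/
def fzVectorFieldY {K : Type*} [Field K] (α β γ δ t x y : K) : K :=
  α - x * y ^ 2 / t + β / x ^ 2 + γ * t * x + δ * t / x ^ 3

def painleveIIIRhs {K : Type*} [Field K] (α β γ δ t x x' : K) : K :=
  x' ^ 2 / x - x' / t + (α * x ^ 2 + β) / t + γ * x ^ 3 + δ / x

theorem HasDerivAt.sq_mul_div_id {𝕜 : Type*} [NontriviallyNormedField 𝕜] {x y : 𝕜 → 𝕜}
    {x' y' t : 𝕜} (hx : HasDerivAt x x' t) (hy : HasDerivAt y y' t) (ht : t ≠ 0) :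
    HasDerivAt (fun s => x s ^ 2 * y s / s)
      ((2 * x t * x' * y t + x t ^ 2 * y') / t - x t ^ 2 * y t / t ^ 2) t := by
  refine (((hx.fun_pow 2).fun_mul hy).fun_div (hasDerivAt_id' t) ht).congr_deriv ?_
  field_simp
  ring

theorem fz_second_derivative_eq_painleveIIIRhs {K : Type*} [Field K] (α β γ δ : K) {t x y : K}
    (hx : x ≠ 0) (ht : t ≠ 0) :
    (2 * x * (x ^ 2 * y / t) * y + x ^ 2 * fzVectorFieldY α β γ δ t x y) / t
        - x ^ 2 * y / t ^ 2 =
      painleveIIIRhs α β γ δ t x (x ^ 2 * y / t) := by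
  unfold fzVectorFieldY painleveIIIRhs
  field_simp
  ring

/-- Solutions of the Filipuk–Żołądek Hamiltonian system give
solutions of the third Painlevé equation with the same parameters `α, β, γ, δ`. -/
theorem FZ_system_gives_PIII (α β γ δ : ℂ) (U : Set ℂ)
    (hU : IsOpen U) (hU0 : (0 : ℂ) ∉ U) (x y : ℂ → ℂ)
    (hx : ∀ t ∈ U, HasDerivAt x ((x t) ^ 2 * y t / t) t)
    (hy : ∀ t ∈ U, HasDerivAt y
      (α - x t * (y t) ^ 2 / t + β / (x t) ^ 2 + γ * t * x t + δ * t / (x t) ^ 3) t)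
    (hxne : ∀ t ∈ U, x t ≠ 0) :
    ∀ t ∈ U, deriv (deriv x) t =
      (deriv x t) ^ 2 / x t - deriv x t / t
        + (α * (x t) ^ 2 + β) / t + γ * (x t) ^ 3 + δ / x t := by
  intro t ht
  have ht0 : t ≠ 0 := ne_of_mem_of_not_mem ht hU0
  have hdx : deriv x =ᶠ[𝓝 t] fun s => x s ^ 2 * y s / s :=
    eventually_of_mem (hU.mem_nhds ht) fun s hs => (hx s hs).deriv
  rw [hdx.deriv_eq, ((hx t ht).sq_mul_div_id (hy t ht) ht0).deriv, (hx t ht).deriv]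
  exact fz_second_derivative_eq_painleveIIIRhs α β γ δ (hxne t ht) ht0
end

section
/- Let a₁, a₂ be complex constants and let V ⊆ ℂ be an open set not containing 0. Suppose q, p : ℂ → ℂ are differentiable on V and satisfy the KNY Hamiltonian system q'(s) = (2 p(s) q(s)² − q(s)² + (a₁+a₂) q(s) + s)/s and p'(s) = −(2 p(s)(p(s)−1) q(s) + (a₁+a₂) p(s) − a₂)/s for all s ∈ V. Let U ⊆ ℂ be an open set of points t with t ≠ 0 and t² ∈ V, and define x(t) = q(t²)/t on U. If q(t²) ≠ 0 for all t ∈ U, then x satisfies the third Painlevé equation x''(t) = x'(t)²/x(t) − x'(t)/t + (α x(t)² + β)/t + γ x(t)³ + δ/x(t) on U with parameters α = −4(a₁ − a₂), β = 4(1 − a₁ − a₂), γ = 4, δ = −4. -/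
/-!
Substituting `s = t²` and `x = q/t`, and writing `P(t) = p(t²)`, turns the KNY system into the
first-order system
  `x' = 2 + (4P - 2) x² + (2(a₁ + a₂) - 1) x / t`,
  `P' = -4P(P - 1) x - 2((a₁ + a₂) P - a₂) / t`.
Differentiating the first equation once more and eliminating `P` by means of the first equation
itself (possible since `x ≠ 0`) gives PIII.
-/

open Filter Topology

variable {𝕜 : Type*} [NontriviallyNormedField 𝕜]

theorem HasDerivAt.comp_sq {f : 𝕜 → 𝕜} {f' t : 𝕜} (hf : HasDerivAt f f' (t ^ 2)) :
    HasDerivAt (fun u => f (u ^ 2)) (2 * t * f') t :=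
  (hf.comp t (hasDerivAt_pow 2 t)).congr_deriv (by push_cast; ring)

namespace KNY

theorem hasDerivAt_q_sq_div {a₁ a₂ : 𝕜} {q p : 𝕜 → 𝕜} {t : 𝕜} (ht0 : t ≠ 0)
    (hq : HasDerivAt q ((2 * p (t ^ 2) * (q (t ^ 2)) ^ 2 - (q (t ^ 2)) ^ 2
      + (a₁ + a₂) * q (t ^ 2) + t ^ 2) / t ^ 2) (t ^ 2)) :
    HasDerivAt (fun u => q (u ^ 2) / u)
      (2 + (4 * p (t ^ 2) - 2) * (q (t ^ 2) / t) ^ 2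
        + (2 * (a₁ + a₂) - 1) * (q (t ^ 2) / t) / t) t := by
  refine (hq.comp_sq.div (hasDerivAt_id' t) ht0).congr_deriv ?_
  field_simp
  ring

theorem hasDerivAt_p_sq {a₁ a₂ : 𝕜} {q p : 𝕜 → 𝕜} {t : 𝕜} (ht0 : t ≠ 0)
    (hp : HasDerivAt p (-((2 * p (t ^ 2) * (p (t ^ 2) - 1) * q (t ^ 2)
      + (a₁ + a₂) * p (t ^ 2) - a₂) / t ^ 2)) (t ^ 2)) :
    HasDerivAt (fun u => p (u ^ 2))
      (-(4 * p (t ^ 2) * (p (t ^ 2) - 1) * (q (t ^ 2) / t))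
        - 2 * ((a₁ + a₂) * p (t ^ 2) - a₂) / t) t := by
  refine hp.comp_sq.congr_deriv ?_
  field_simp
  ring

theorem painleveIII_of_rescaled_system {a₁ a₂ : 𝕜} {x P : 𝕜 → 𝕜} {U : Set 𝕜}
    (hU : IsOpen U)
    (hx : ∀ t ∈ U, HasDerivAt x
      (2 + (4 * P t - 2) * x t ^ 2 + (2 * (a₁ + a₂) - 1) * x t / t) t)
    (hP : ∀ t ∈ U, HasDerivAt P
      (-(4 * P t * (P t - 1) * x t) - 2 * ((a₁ + a₂) * P t - a₂) / t) t)
    {t : 𝕜} (ht : t ∈ U) (ht0 : t ≠ 0) (hxt : x t ≠ 0) :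
    deriv (deriv x) t =
      (deriv x t) ^ 2 / x t - deriv x t / t
        + ((-4 * (a₁ - a₂)) * (x t) ^ 2 + 4 * (1 - a₁ - a₂)) / t
        + 4 * (x t) ^ 3 + (-4) / x t := by
  have hderiv : deriv x =ᶠ[𝓝 t]
      fun u => 2 + (4 * P u - 2) * x u ^ 2 + (2 * (a₁ + a₂) - 1) * x u / u :=
    eventually_of_mem (hU.mem_nhds ht) fun u hu => (hx u hu).deriv
  have hderiv2 : HasDerivAt
      (fun u => 2 + (4 * P u - 2) * x u ^ 2 + (2 * (a₁ + a₂) - 1) * x u / u) _ t :=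
    ((hasDerivAt_const t 2).add
      ((((hP t ht).const_mul 4).sub_const 2).mul ((hx t ht).pow 2))).add
      (((hx t ht).const_mul _).div (hasDerivAt_id' t) ht0)
  rw [hderiv.deriv_eq, hderiv2.deriv, (hx t ht).deriv, Pi.pow_apply]
  field_simp
  ring

end KNY

theorem KNY_system_gives_PIII_general (a₁ a₂ : ℂ) (V : Set ℂ)
    (q p : ℂ → ℂ)
    (hq : ∀ s ∈ V, HasDerivAt q
      ((2 * p s * (q s) ^ 2 - (q s) ^ 2 + (a₁ + a₂) * q s + s) / s) s)
    (hp : ∀ s ∈ V, HasDerivAt p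
      (-((2 * p s * (p s - 1) * q s + (a₁ + a₂) * p s - a₂) / s)) s)
    (U : Set ℂ) (hU : IsOpen U) (hUV : ∀ t ∈ U, t ≠ 0 ∧ t ^ 2 ∈ V)
    (x : ℂ → ℂ) (hx : ∀ t ∈ U, x t = q (t ^ 2) / t)
    (hqne : ∀ t ∈ U, q (t ^ 2) ≠ 0) :
    ∀ t ∈ U, deriv (deriv x) t =
      (deriv x t) ^ 2 / x t - deriv x t / t
        + ((-4 * (a₁ - a₂)) * (x t) ^ 2 + 4 * (1 - a₁ - a₂)) / t
        + 4 * (x t) ^ 3 + (-4) / x t := by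
  intro t ht
  refine KNY.painleveIII_of_rescaled_system (P := fun u => p (u ^ 2)) hU
    (fun u hu => ?_) (fun u hu => ?_) ht (hUV t ht).1 ?_
  · have hx_nhds : x =ᶠ[𝓝 u] fun v => q (v ^ 2) / v := eventually_of_mem (hU.mem_nhds hu) hx
    rw [hx u hu]
    exact (KNY.hasDerivAt_q_sq_div (hUV u hu).1 (hq _ (hUV u hu).2)).congr_of_eventuallyEq
      hx_nhds
  · rw [hx u hu]
    exact KNY.hasDerivAt_p_sq (hUV u hu).1 (hp _ (hUV u hu).2)
  · rw [hx t ht]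
    exact div_ne_zero (hqne t ht) (hUV t ht).1

/-- If `(q, p)` solves the KNY Hamiltonian system on `V` and
`x(t) = q(t²)/t` on an open set `U` of points `t ≠ 0` with `t² ∈ V`, and `q(t²) ≠ 0`
on `U`, then `x` solves the third Painlevé equation with parameters
`α = −4(a₁ − a₂)`, `β = 4(1 − a₁ − a₂)`, `γ = 4`, `δ = −4`. -/
theorem KNY_system_gives_PIII (a₁ a₂ : ℂ) (V : Set ℂ)
    (hV : IsOpen V) (hV0 : (0 : ℂ) ∉ V) (q p : ℂ → ℂ)
    (hq : ∀ s ∈ V, HasDerivAt q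
      ((2 * p s * (q s) ^ 2 - (q s) ^ 2 + (a₁ + a₂) * q s + s) / s) s)
    (hp : ∀ s ∈ V, HasDerivAt p
      (-((2 * p s * (p s - 1) * q s + (a₁ + a₂) * p s - a₂) / s)) s)
    (U : Set ℂ) (hU : IsOpen U) (hUV : ∀ t ∈ U, t ≠ 0 ∧ t ^ 2 ∈ V)
    (x : ℂ → ℂ) (hx : ∀ t ∈ U, x t = q (t ^ 2) / t)
    (hqne : ∀ t ∈ U, q (t ^ 2) ≠ 0) :
    ∀ t ∈ U, deriv (deriv x) t =
      (deriv x t) ^ 2 / x t - deriv x t / t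
        + ((-4 * (a₁ - a₂)) * (x t) ^ 2 + 4 * (1 - a₁ - a₂)) / t
        + 4 * (x t) ^ 3 + (-4) / x t :=
  KNY_system_gives_PIII_general a₁ a₂ V q p hq hp U hU hUV x hx hqne
end

section
/- Let θ₀, θ∞, η₀, η∞ be complex constants and let U ⊆ ℂ be an open set not containing 0. Suppose f, g : ℂ → ℂ are differentiable on U, satisfy the Okamoto Hamiltonian system f'(t) = (4 f² g − 2 η∞ t f² − (1+2θ₀) f + 2 η₀ t)/t, g'(t) = −(4 f g² − (1+2θ₀+4 η∞ t f) g + η∞(θ₀+θ∞) t)/t on U, and f(t) ≠ 0 on U. Define x(t) = f(t) and y(t) = (4 f(t)² g(t) − 2 η∞ t f(t)² − (2θ₀+1) f(t) + 2 η₀ t)/f(t)². Then x, y satisfy the Filipuk–Żołądek system x'(t) = x² y/t and y'(t) = α − x y²/t + β/x² + γ t x + δ t/x³ on U, with parameters α = −4 η∞ θ∞, β = 4 η₀(1 + θ₀), γ = 4 η∞², δ = −4 η₀². -/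
/-!
Along a solution the new variable is `y = t f' / f²`, so `x' = x² y / t` is just the first
Okamoto equation. Differentiating `y = N / f²` (with `N` the numerator of `f'`) by the quotient
rule and eliminating `f'`, `g'` with the Okamoto system leaves a rational identity in `t, f, g`,
which is the second Filipuk–Żołądek equation.
-/

section

variable {𝕜 : Type*} [NontriviallyNormedField 𝕜]

theorem HasDerivAt.div_sq {N f : 𝕜 → 𝕜} {N' f' t : 𝕜} (hN : HasDerivAt N N' t)
    (hf : HasDerivAt f f' t) (hft : f t ≠ 0) :
    HasDerivAt (fun s => N s / f s ^ 2) ((N' * f t - 2 * N t * f') / f t ^ 3) t :=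
  (hN.div (hf.fun_pow 2) (pow_ne_zero 2 hft)).congr_deriv (by field_simp; ring)

end

noncomputable section

variable (θ₀ θinf η₀ ηinf : ℂ)

/-- `∂H^Ok/∂g`; `okamotoFieldG` is `-∂H^Ok/∂f`, and `fzFieldX`, `fzFieldY` are the
Filipuk–Żołądek right-hand sides. -/
def okamotoFieldF (t F G : ℂ) : ℂ :=
  (4 * F ^ 2 * G - 2 * ηinf * t * F ^ 2 - (1 + 2 * θ₀) * F + 2 * η₀ * t) / t

def okamotoFieldG (t F G : ℂ) : ℂ :=
  -((4 * F * G ^ 2 - (1 + 2 * θ₀ + 4 * ηinf * t * F) * G + ηinf * (θ₀ + θinf) * t) / t)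

def okamotoToFZNum (t F G : ℂ) : ℂ :=
  4 * F ^ 2 * G - 2 * ηinf * t * F ^ 2 - (2 * θ₀ + 1) * F + 2 * η₀ * t

def fzFieldX (t X Y : ℂ) : ℂ := X ^ 2 * Y / t

def fzFieldY (α β γ δ t X Y : ℂ) : ℂ :=
  α - X * Y ^ 2 / t + β / X ^ 2 + γ * t * X + δ * t / X ^ 3

variable {θ₀ η₀ ηinf}

theorem hasDerivAt_okamotoToFZNum {f g : ℂ → ℂ} {f' g' t : ℂ} (hf : HasDerivAt f f' t)
    (hg : HasDerivAt g g' t) :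
    HasDerivAt (fun s => okamotoToFZNum θ₀ η₀ ηinf s (f s) (g s))
      (8 * f t * f' * g t + 4 * f t ^ 2 * g' - 2 * ηinf * f t ^ 2 - 4 * ηinf * t * f t * f'
        - (2 * θ₀ + 1) * f' + 2 * η₀) t := by
  have hs := hasDerivAt_id' t
  exact (((((hf.fun_pow 2).const_mul 4).fun_mul hg).fun_sub
    ((hs.const_mul (2 * ηinf)).fun_mul (hf.fun_pow 2))).fun_sub (hf.const_mul (2 * θ₀ + 1))
    |>.fun_add (hs.const_mul (2 * η₀))).congr_deriv (by ring)

theorem okamotoFieldF_eq_fzFieldX {t : ℂ} (ht : t ≠ 0) {F : ℂ} (hF : F ≠ 0) (G : ℂ) :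
    okamotoFieldF θ₀ η₀ ηinf t F G =
      fzFieldX t F (okamotoToFZNum θ₀ η₀ ηinf t F G / F ^ 2) := by
  simp only [okamotoFieldF, fzFieldX, okamotoToFZNum]
  field_simp
  ring

theorem okamotoToFZ_deriv_y_eq_fzFieldY {t : ℂ} (ht : t ≠ 0) {F : ℂ} (hF : F ≠ 0) (G : ℂ) :
    let F' := okamotoFieldF θ₀ η₀ ηinf t F G
    let G' := okamotoFieldG θ₀ θinf ηinf t F G
    ((8 * F * F' * G + 4 * F ^ 2 * G' - 2 * ηinf * F ^ 2 - 4 * ηinf * t * F * F'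
        - (2 * θ₀ + 1) * F' + 2 * η₀) * F - 2 * okamotoToFZNum θ₀ η₀ ηinf t F G * F') / F ^ 3 =
      fzFieldY (-4 * ηinf * θinf) (4 * η₀ * (1 + θ₀)) (4 * ηinf ^ 2) (-4 * η₀ ^ 2) t F
        (okamotoToFZNum θ₀ η₀ ηinf t F G / F ^ 2) := by
  simp only [okamotoFieldF, okamotoFieldG, fzFieldY, okamotoToFZNum]
  field_simp
  ring

end

theorem okamoto_to_FZ_general (θ₀ θinf η₀ ηinf : ℂ) (U : Set ℂ)
    (hU0 : (0 : ℂ) ∉ U) (f g : ℂ → ℂ)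
    (hf : ∀ t ∈ U, HasDerivAt f
      ((4 * (f t) ^ 2 * g t - 2 * ηinf * t * (f t) ^ 2 - (1 + 2 * θ₀) * f t + 2 * η₀ * t) / t) t)
    (hg : ∀ t ∈ U, HasDerivAt g
      (-((4 * f t * (g t) ^ 2 - (1 + 2 * θ₀ + 4 * ηinf * t * f t) * g t
        + ηinf * (θ₀ + θinf) * t) / t)) t)
    (hfne : ∀ t ∈ U, f t ≠ 0)
    (x y : ℂ → ℂ)
    (hx : ∀ t, x t = f t)
    (hy : ∀ t, y t =
      (4 * (f t) ^ 2 * g t - 2 * ηinf * t * (f t) ^ 2 - (2 * θ₀ + 1) * f t + 2 * η₀ * t)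
        / (f t) ^ 2) :
    ∀ t ∈ U,
      HasDerivAt x ((x t) ^ 2 * y t / t) t ∧
      HasDerivAt y ((-4 * ηinf * θinf) - x t * (y t) ^ 2 / t
        + (4 * η₀ * (1 + θ₀)) / (x t) ^ 2 + (4 * ηinf ^ 2) * t * x t
        + (-4 * η₀ ^ 2) * t / (x t) ^ 3) t := by
  intro t ht
  have ht0 : t ≠ 0 := fun h => hU0 (h ▸ ht)
  obtain rfl : x = f := funext hx
  obtain rfl : y = fun s => okamotoToFZNum θ₀ η₀ ηinf s (x s) (g s) / x s ^ 2 := funext hy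
  exact ⟨(hf t ht).congr_deriv (okamotoFieldF_eq_fzFieldX ht0 (hfne t ht) (g t)),
    ((hasDerivAt_okamotoToFZNum (hf t ht) (hg t ht)).div_sq (hf t ht) (hfne t ht)).congr_deriv
      (okamotoToFZ_deriv_y_eq_fzFieldY θinf ht0 (hfne t ht) (g t))⟩

/-- Under `x = f`, `y = (4f²g − 2η∞tf² − (2θ₀+1)f + 2η₀t)/f²`,
solutions of the Okamoto system for PIII are mapped to solutions of the
Filipuk–Żołądek system with `α = −4η∞θ∞`, `β = 4η₀(1+θ₀)`, `γ = 4η∞²`, `δ = −4η₀²`. -/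
theorem okamoto_to_FZ (θ₀ θinf η₀ ηinf : ℂ) (U : Set ℂ)
    (hU : IsOpen U) (hU0 : (0 : ℂ) ∉ U) (f g : ℂ → ℂ)
    (hf : ∀ t ∈ U, HasDerivAt f
      ((4 * (f t) ^ 2 * g t - 2 * ηinf * t * (f t) ^ 2 - (1 + 2 * θ₀) * f t + 2 * η₀ * t) / t) t)
    (hg : ∀ t ∈ U, HasDerivAt g
      (-((4 * f t * (g t) ^ 2 - (1 + 2 * θ₀ + 4 * ηinf * t * f t) * g t
        + ηinf * (θ₀ + θinf) * t) / t)) t)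
    (hfne : ∀ t ∈ U, f t ≠ 0)
    (x y : ℂ → ℂ)
    (hx : ∀ t, x t = f t)
    (hy : ∀ t, y t =
      (4 * (f t) ^ 2 * g t - 2 * ηinf * t * (f t) ^ 2 - (2 * θ₀ + 1) * f t + 2 * η₀ * t)
        / (f t) ^ 2) :
    ∀ t ∈ U,
      HasDerivAt x ((x t) ^ 2 * y t / t) t ∧
      HasDerivAt y ((-4 * ηinf * θinf) - x t * (y t) ^ 2 / t
        + (4 * η₀ * (1 + θ₀)) / (x t) ^ 2 + (4 * ηinf ^ 2) * t * x t
        + (-4 * η₀ ^ 2) * t / (x t) ^ 3) t :=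
  okamoto_to_FZ_general θ₀ θinf η₀ ηinf U hU0 f g hf hg hfne x y hx hy
end

section
/- Let θ₀, θ∞, η₀, η∞ be complex constants, set α = −4 η∞ θ∞, β = 4 η₀(1 + θ₀), γ = 4 η∞², δ = −4 η₀², and let U ⊆ ℂ be an open set not containing 0. Suppose x, y : ℂ → ℂ are differentiable on U, satisfy the Filipuk–Żołądek system x'(t) = x² y/t, y'(t) = α − x y²/t + β/x² + γ t x + δ t/x³ on U, and x(t) ≠ 0 on U. Define f(t) = x(t) and g(t) = (x(t)² y(t) + 2 η∞ t x(t)² + (2θ₀+1) x(t) − 2 η₀ t)/(4 x(t)²). Then f, g satisfy the Okamoto Hamiltonian system f'(t) = (4 f² g − 2 η∞ t f² − (1+2θ₀) f + 2 η₀ t)/t and g'(t) = −(4 f g² − (1+2θ₀+4 η∞ t f) g + η∞(θ₀+θ∞) t)/t on U. -/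
/-!
Along the change of variables `f' = x'` is immediate, and `g` is an explicit rational
function `G(t, x, y)`, so `g' = G_t + G_x x' + G_y y'`. Substituting the Filipuk–Żołądek
equations for `x'` and `y'` and the parameter relations, both Okamoto right-hand sides become
identities of rational functions in `t, x, y`, valid wherever `t x ≠ 0`.
-/

def okamotoCoordG {K : Type*} [Field K] (θ₀ η₀ ηinf t x y : K) : K :=
  (x ^ 2 * y + 2 * ηinf * t * x ^ 2 + (2 * θ₀ + 1) * x - 2 * η₀ * t) / (4 * x ^ 2)

section Algebra

variable {K : Type*} [Field K] [CharZero K] (θ₀ θinf η₀ ηinf t x y : K)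

theorem okamoto_f_rhs_eq (ht : t ≠ 0) (hx : x ≠ 0) :
    (4 * x ^ 2 * okamotoCoordG θ₀ η₀ ηinf t x y - 2 * ηinf * t * x ^ 2 - (1 + 2 * θ₀) * x
      + 2 * η₀ * t) / t = x ^ 2 * y / t := by
  unfold okamotoCoordG
  field_simp
  ring

theorem okamoto_g_rhs_eq (ht : t ≠ 0) (hx : x ≠ 0) :
    let x' := x ^ 2 * y / t
    let y' := -4 * ηinf * θinf - x * y ^ 2 / t + 4 * η₀ * (1 + θ₀) / x ^ 2
      + 4 * ηinf ^ 2 * t * x + -4 * η₀ ^ 2 * t / x ^ 3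
    let G := okamotoCoordG θ₀ η₀ ηinf t x y
    y' / 4 + ηinf / 2 - (2 * θ₀ + 1) * x' / (4 * x ^ 2) - η₀ / (2 * x ^ 2)
        + η₀ * t * x' / x ^ 3
      = -((4 * x * G ^ 2 - (1 + 2 * θ₀ + 4 * ηinf * t * x) * G
          + ηinf * (θ₀ + θinf) * t) / t) := by
  unfold okamotoCoordG
  field_simp
  ring

end Algebra

theorem hasDerivAt_okamotoCoordG {𝕜 : Type*} [NontriviallyNormedField 𝕜] [CharZero 𝕜]
    {θ₀ η₀ ηinf : 𝕜} {x y : 𝕜 → 𝕜} {x' y' t : 𝕜}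
    (hx : HasDerivAt x x' t) (hy : HasDerivAt y y' t)
    (hxt : x t ≠ 0) :
    HasDerivAt (fun s => okamotoCoordG θ₀ η₀ ηinf s (x s) (y s))
      (y' / 4 + ηinf / 2 - (2 * θ₀ + 1) * x' / (4 * x t ^ 2) - η₀ / (2 * x t ^ 2)
        + η₀ * t * x' / x t ^ 3) t := by
  have hs : HasDerivAt (fun s : 𝕜 => s) 1 t := hasDerivAt_id t
  have hnum := ((((hx.pow 2).mul hy).add ((hs.const_mul (2 * ηinf)).mul (hx.pow 2))).add
    (hx.const_mul (2 * θ₀ + 1))).sub (hs.const_mul (2 * η₀))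
  refine (hnum.div ((hx.pow 2).const_mul 4) (by simpa using hxt)).congr_deriv ?_
  simp only [Pi.sub_apply, Pi.add_apply, Pi.mul_apply, Pi.pow_apply, Nat.cast_ofNat]
  field_simp
  ring

theorem FZ_to_okamoto_general (θ₀ θinf η₀ ηinf : ℂ)
    (α β γ δ : ℂ) (hα : α = -4 * ηinf * θinf) (hβ : β = 4 * η₀ * (1 + θ₀))
    (hγ : γ = 4 * ηinf ^ 2) (hδ : δ = -4 * η₀ ^ 2)
    (U : Set ℂ) (hU0 : (0 : ℂ) ∉ U) (x y : ℂ → ℂ)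
    (hx : ∀ t ∈ U, HasDerivAt x ((x t) ^ 2 * y t / t) t)
    (hy : ∀ t ∈ U, HasDerivAt y
      (α - x t * (y t) ^ 2 / t + β / (x t) ^ 2 + γ * t * x t + δ * t / (x t) ^ 3) t)
    (hxne : ∀ t ∈ U, x t ≠ 0)
    (f g : ℂ → ℂ)
    (hf : ∀ t, f t = x t)
    (hg : ∀ t, g t =
      ((x t) ^ 2 * y t + 2 * ηinf * t * (x t) ^ 2 + (2 * θ₀ + 1) * x t - 2 * η₀ * t)
        / (4 * (x t) ^ 2)) :
    ∀ t ∈ U,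
      HasDerivAt f
        ((4 * (f t) ^ 2 * g t - 2 * ηinf * t * (f t) ^ 2 - (1 + 2 * θ₀) * f t + 2 * η₀ * t) / t) t ∧
      HasDerivAt g
        (-((4 * f t * (g t) ^ 2 - (1 + 2 * θ₀ + 4 * ηinf * t * f t) * g t
          + ηinf * (θ₀ + θinf) * t) / t)) t := by
  intro t ht
  have ht0 : t ≠ 0 := fun h => hU0 (h ▸ ht)
  have hxt := hxne t ht
  rw [show f = x from funext hf,
    show g = fun s => okamotoCoordG θ₀ η₀ ηinf s (x s) (y s) from funext hg]
  subst hα hβ hγ hδ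
  refine ⟨?_, ?_⟩
  · rw [okamoto_f_rhs_eq θ₀ η₀ ηinf t (x t) (y t) ht0 hxt]
    exact hx t ht
  · rw [← okamoto_g_rhs_eq θ₀ θinf η₀ ηinf t (x t) (y t) ht0 hxt]
    exact hasDerivAt_okamotoCoordG (hx t ht) (hy t ht) hxt

/-- Under `f = x`, `g = (x²y + 2η∞tx² + (2θ₀+1)x − 2η₀t)/(4x²)`,
solutions of the Filipuk–Żołądek system with `α = −4η∞θ∞`, `β = 4η₀(1+θ₀)`,
`γ = 4η∞²`, `δ = −4η₀²` are mapped to solutions of the Okamoto system for PIII. -/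
theorem FZ_to_okamoto (θ₀ θinf η₀ ηinf : ℂ)
    (α β γ δ : ℂ) (hα : α = -4 * ηinf * θinf) (hβ : β = 4 * η₀ * (1 + θ₀))
    (hγ : γ = 4 * ηinf ^ 2) (hδ : δ = -4 * η₀ ^ 2)
    (U : Set ℂ) (hU : IsOpen U) (hU0 : (0 : ℂ) ∉ U) (x y : ℂ → ℂ)
    (hx : ∀ t ∈ U, HasDerivAt x ((x t) ^ 2 * y t / t) t)
    (hy : ∀ t ∈ U, HasDerivAt y
      (α - x t * (y t) ^ 2 / t + β / (x t) ^ 2 + γ * t * x t + δ * t / (x t) ^ 3) t)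
    (hxne : ∀ t ∈ U, x t ≠ 0)
    (f g : ℂ → ℂ)
    (hf : ∀ t, f t = x t)
    (hg : ∀ t, g t =
      ((x t) ^ 2 * y t + 2 * ηinf * t * (x t) ^ 2 + (2 * θ₀ + 1) * x t - 2 * η₀ * t)
        / (4 * (x t) ^ 2)) :
    ∀ t ∈ U,
      HasDerivAt f
        ((4 * (f t) ^ 2 * g t - 2 * ηinf * t * (f t) ^ 2 - (1 + 2 * θ₀) * f t + 2 * η₀ * t) / t) t ∧
      HasDerivAt g
        (-((4 * f t * (g t) ^ 2 - (1 + 2 * θ₀ + 4 * ηinf * t * f t) * g t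
          + ηinf * (θ₀ + θinf) * t) / t)) t :=
  FZ_to_okamoto_general θ₀ θinf η₀ ηinf α β γ δ hα hβ hγ hδ U hU0 x y hx hy hxne f g hf hg
end

section
/- Fix complex constants a₁, a₂ with α = −4(a₁ − a₂), β = 4(1 − a₁ − a₂), and fix t ∈ ℂ with t ≠ 0. Define Φ_t : ℂ × ℂ → ℂ × ℂ by Φ_t(x,y) = (tx, (2x²y + 4tx² + (β−2)x − 4t)/(8tx²)) and Ψ_t : ℂ × ℂ → ℂ × ℂ by Ψ_t(q,p) = (q/t, t(8pq² − 4q² − 2(1−2a₁−2a₂)q + 4t²)/(2q²)). Then for all (x,y) with x ≠ 0, Ψ_t(Φ_t(x,y)) = (x,y), and for all (q,p) with q ≠ 0, Φ_t(Ψ_t(q,p)) = (q,p); i.e. the transformation between the Filipuk–Żołądek and KNY variables in Theorem 2.2 is birational with the stated inverse. -/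
/-- The change of variables of Theorem 2.2 between the
Filipuk–Żołądek and KNY variables (for fixed `t ≠ 0`, `s = t²`, `√s = t`)
is birational, with the stated inverse. -/
theorem FZ_KNY_birational (a₁ a₂ : ℂ)
    (α β : ℂ) (hα : α = -4 * (a₁ - a₂)) (hβ : β = 4 * (1 - a₁ - a₂))
    (t : ℂ) (ht : t ≠ 0)
    (Φ Ψ : ℂ × ℂ → ℂ × ℂ)
    (hΦ : ∀ x y : ℂ, Φ (x, y) =
      (t * x, (2 * x ^ 2 * y + 4 * t * x ^ 2 + (β - 2) * x - 4 * t) / (8 * t * x ^ 2)))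
    (hΨ : ∀ q p : ℂ, Ψ (q, p) =
      (q / t, t * (8 * p * q ^ 2 - 4 * q ^ 2 - 2 * (1 - 2 * a₁ - 2 * a₂) * q + 4 * t ^ 2)
        / (2 * q ^ 2))) :
    (∀ x y : ℂ, x ≠ 0 → Ψ (Φ (x, y)) = (x, y)) ∧
    (∀ q p : ℂ, q ≠ 0 → Φ (Ψ (q, p)) = (q, p)) := by
  subst hα hβ
  constructor
  · intro x y hx
    rw [hΦ, hΨ]
    have htx : t * x ≠ 0 := mul_ne_zero ht hx
    simp only [Prod.mk.injEq]
    refine ⟨by field_simp, ?_⟩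
    rw [div_eq_iff (by simp [ht, hx] : (2:ℂ) * (t * x) ^ 2 ≠ 0)]
    field_simp
    ring
  · intro q p hq
    obtain ⟨x, rfl⟩ : ∃ x, q = t * x := ⟨q / t, by field_simp⟩
    have hx : x ≠ 0 := fun h => hq (by simp [h])
    rw [hΨ, hΦ]
    simp only [Prod.mk.injEq]
    have h1 : t * x / t = x := by field_simp
    rw [h1]
    refine ⟨rfl, ?_⟩
    rw [div_eq_iff (by simp [ht, hx] : (8:ℂ) * t * x ^ 2 ≠ 0)]
    field_simp
    ring
end

section
/- Let a₁ be a complex constant, set α = −8, β = −4(a₁ − 1), and let U ⊆ ℂ be an open set not containing 0. Suppose x, y : ℂ → ℂ are differentiable on U, satisfy the Filipuk–Żołądek system x'(t) = x² y/t and y'(t) = α − x y²/t + β/x² − 4 t/x³ (i.e. the case γ = 0, δ = −4) on U, and x(t) ≠ 0 on U. Suppose q, p : ℂ → ℂ are differentiable functions with q(t²) = t x(t) and p(t²) = (x(t)² y(t) − 2 a₁ x(t) + x(t) − 2t)/(4 t x(t)²) for all t ∈ U. Then for all s = t² with t ∈ U, q and p satisfy the Hamiltonian system associated to the degenerate (surface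 type D₇⁽¹⁾) KNY Hamiltonian K₁(q,p,s) = (q² p² + q + p s + a₁ q p)/s, namely q'(s) = (2 q² p + s + a₁ q)/s and p'(s) = −(2 q p² + 1 + a₁ p)/s. -/
/-!
Since `q (t ^ 2) = t * x t` near `t` and `d(t ^ 2)/dt = 2 * t ≠ 0` on `U`, the chain rule
determines `q'` at `t ^ 2` from the derivative of `t * x t`, which the Filipuk–Żołądek
equations give explicitly; likewise for `p`. Both Hamiltonian equations then reduce to
identities between rational functions of `t`, `x t`, `y t`.
-/

open Filter Topology

theorem DifferentiableAt.hasDerivAt_of_comp_eventuallyEq {𝕜 : Type*} [NontriviallyNormedField 𝕜]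
    {f g φ : 𝕜 → 𝕜} {t f' φ' : 𝕜} (hf : DifferentiableAt 𝕜 f (φ t))
    (hφ : HasDerivAt φ φ' t) (hφ' : φ' ≠ 0) (hfg : f ∘ φ =ᶠ[𝓝 t] g)
    (hg : HasDerivAt g (f' * φ') t) : HasDerivAt f f' (φ t) := by
  have hcomp : HasDerivAt g (deriv f (φ t) * φ') t :=
    (hf.hasDerivAt.comp t hφ).congr_of_eventuallyEq hfg.symm
  rw [← mul_right_cancel₀ hφ' (hcomp.unique hg)]
  exact hf.hasDerivAt

noncomputable def fzToKNYp (a₁ t X Y : ℂ) : ℂ :=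
  (X ^ 2 * Y - 2 * a₁ * X + X - 2 * t) / (4 * t * X ^ 2)

section FZFlow

variable {a₁ t : ℂ} {x y : ℂ → ℂ}

theorem hasDerivAt_id_mul_of_FZ (ht : t ≠ 0) (hxt : x t ≠ 0)
    (hx : HasDerivAt x (x t ^ 2 * y t / t) t) :
    HasDerivAt (fun u => u * x u)
      ((2 * (t * x t) ^ 2 * fzToKNYp a₁ t (x t) (y t) + t ^ 2 + a₁ * (t * x t)) / t ^ 2
        * (2 * t)) t := by
  refine ((hasDerivAt_id' t).fun_mul hx).congr_deriv ?_
  unfold fzToKNYp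
  field_simp
  ring

theorem hasDerivAt_fzToKNYp_of_FZ (ht : t ≠ 0) (hxt : x t ≠ 0)
    (hx : HasDerivAt x (x t ^ 2 * y t / t) t)
    (hy : HasDerivAt y
      (-8 - x t * y t ^ 2 / t + -4 * (a₁ - 1) / x t ^ 2 - 4 * t / x t ^ 3) t) :
    HasDerivAt (fun u => fzToKNYp a₁ u (x u) (y u))
      (-((2 * (t * x t) * fzToKNYp a₁ t (x t) (y t) ^ 2 + 1
          + a₁ * fzToKNYp a₁ t (x t) (y t)) / t ^ 2) * (2 * t)) t := by
  have hnum := ((((hx.fun_pow 2).fun_mul hy).fun_sub (hx.const_mul (2 * a₁))).fun_add hx).fun_sub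
    ((hasDerivAt_id' t).const_mul 2)
  have hden := ((hasDerivAt_id' t).const_mul 4).fun_mul (hx.fun_pow 2)
  have hden0 : 4 * t * x t ^ 2 ≠ 0 := by simp [ht, hxt]
  refine (hnum.fun_div hden hden0).congr_deriv ?_
  unfold fzToKNYp
  field_simp
  ring

end FZFlow

/-- Under `s = t²`, `q(t²) = t x(t)`,
`p(t²) = (x²y − 2a₁x + x − 2t)/(4tx²)`, solutions of the Filipuk–Żołądek system
with `α = −8`, `β = −4(a₁ − 1)`, `γ = 0`, `δ = −4` are mapped to solutions of the
system with degenerate (surface type `D₇⁽¹⁾`) KNY Hamiltonian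
`K₁ = (q²p² + q + ps + a₁qp)/s`. -/
theorem FZ_to_degenerate_KNY_D7 (a₁ : ℂ)
    (α β : ℂ) (hα : α = -8) (hβ : β = -4 * (a₁ - 1))
    (U : Set ℂ) (hU : IsOpen U) (hU0 : (0 : ℂ) ∉ U) (x y : ℂ → ℂ)
    (hx : ∀ t ∈ U, HasDerivAt x ((x t) ^ 2 * y t / t) t)
    (hy : ∀ t ∈ U, HasDerivAt y
      (α - x t * (y t) ^ 2 / t + β / (x t) ^ 2 - 4 * t / (x t) ^ 3) t)
    (hxne : ∀ t ∈ U, x t ≠ 0)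
    (q p : ℂ → ℂ)
    (hqd : ∀ t ∈ U, DifferentiableAt ℂ q (t ^ 2))
    (hpd : ∀ t ∈ U, DifferentiableAt ℂ p (t ^ 2))
    (hq : ∀ t ∈ U, q (t ^ 2) = t * x t)
    (hp : ∀ t ∈ U, p (t ^ 2) =
      ((x t) ^ 2 * y t - 2 * a₁ * x t + x t - 2 * t) / (4 * t * (x t) ^ 2)) :
    ∀ t ∈ U, ∀ s, s = t ^ 2 →
      HasDerivAt q ((2 * (q s) ^ 2 * p s + s + a₁ * q s) / s) s ∧
      HasDerivAt p (-((2 * q s * (p s) ^ 2 + 1 + a₁ * p s) / s)) s := by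
  subst hα hβ
  intro t ht s rfl
  have ht0 : t ≠ 0 := ne_of_mem_of_not_mem ht hU0
  have hsq : HasDerivAt (· ^ 2) (2 * t) t := by simpa using hasDerivAt_pow 2 t
  have h2t : 2 * t ≠ 0 := mul_ne_zero two_ne_zero ht0
  rw [hq t ht, hp t ht]
  constructor
  · refine (hqd t ht).hasDerivAt_of_comp_eventuallyEq hsq h2t ?_
      (hasDerivAt_id_mul_of_FZ ht0 (hxne t ht) (hx t ht))
    filter_upwards [hU.mem_nhds ht] with u hu using hq u hu
  · refine (hpd t ht).hasDerivAt_of_comp_eventuallyEq hsq h2t ?_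
      (hasDerivAt_fzToKNYp_of_FZ ht0 (hxne t ht) (hx t ht) (hy t ht))
    filter_upwards [hU.mem_nhds ht] with u hu using hp u hu
end
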